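/- arXiv:2203.01672 — 2 statements merged into one kernel-verified Lean document; each statement's English description precedes it below -/
import Mathlib

section
/- Removing 'younger sibling' environment choices preserves alternating simulation equivalence: let S be an LTS with maximal self-ASR R_max. A transition (p, u, q') is a younger sibling of (p, u, q) if (q, q') ∈ R_max and (q', q) ∉ R_max; an initial state q0' is a younger sibling of initial state q0 if (q0, q0') ∈ R_max and (q0', q0) ∉ R_max. Form S_3 from S by deleting all younger-sibling transitions from δ and all younger-sibling initial states from X0 (keeping the same state set, inputs, outputs, and output map). Then the identity relation is an ASR from S to S_3, R_max is an ASR from S_3 to S, and hence S_3 ≃_AS S. -/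
/-- A labelled transition system with states `X`, inputs `U`, outputs `Y`. -/
structure LTS (X U Y : Type) where
  init : Set X
  tr : Set (X × U × X)
  out : X → Y

namespace LTS

variable {X U Y Xa Xb Xc : Type}

/-- The set of `u`-successors of `x`. -/
def Post (S : LTS X U Y) (x : X) (u : U) : Set X := {x' | (x, u, x') ∈ S.tr}

/-- The set of inputs enabled at `x`. -/
def Enabled (S : LTS X U Y) (x : X) : Set U := {u | ∃ x', (x, u, x') ∈ S.tr}

/-- `R` is an alternating simulation relation from `Sa` to `Sb`. -/
def IsASR (Sa : LTS Xa U Y) (Sb : LTS Xb U Y) (R : Set (Xa × Xb)) : Prop :=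
  (∀ xb ∈ Sb.init, ∃ xa ∈ Sa.init, (xa, xb) ∈ R) ∧
  (∀ xa xb, (xa, xb) ∈ R → Sa.out xa = Sb.out xb) ∧
  (∀ xa xb, (xa, xb) ∈ R → ∀ ua ∈ Sa.Enabled xa,
    ∃ ub ∈ Sb.Enabled xb, ∀ xb' ∈ Sb.Post xb ub,
      ∃ xa' ∈ Sa.Post xa ua, (xa', xb') ∈ R)

/-- Alternating simulation equivalence. -/
def ASE (Sa : LTS Xa U Y) (Sb : LTS Xb U Y) : Prop :=
  (∃ R, Sa.IsASR Sb R) ∧ (∃ R', Sb.IsASR Sa R')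

/-- The union of all alternating simulation relations from `Sa` to `Sb`. -/
def MaxASR (Sa : LTS Xa U Y) (Sb : LTS Xb U Y) : Set (Xa × Xb) :=
  {p | ∃ R, Sa.IsASR Sb R ∧ p ∈ R}

/-- `S` reinitialized at the single state `x`. -/
def withInit (S : LTS X U Y) (x : X) : LTS X U Y := { S with init := {x} }

end LTS

/-- Initial states that are younger siblings of another initial state. -/
def youngerInit {X U Y : Type} (S : LTS X U Y) : Set X :=
  {q0' | ∃ q0 ∈ S.init, (q0, q0') ∈ S.MaxASR S ∧ (q0', q0) ∉ S.MaxASR S}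

/-- Transitions that are younger siblings of another transition. -/
def youngerTr {X U Y : Type} (S : LTS X U Y) : Set (X × U × X) :=
  {t | t ∈ S.tr ∧ ∃ q, (t.1, t.2.1, q) ∈ S.tr ∧
    (q, t.2.2) ∈ S.MaxASR S ∧ (t.2.2, q) ∉ S.MaxASR S}

/-- Step 3: delete all younger-sibling transitions and initial states. -/
def step3 {X U Y : Type} (S : LTS X U Y) : LTS X U Y where
  init := S.init \ youngerInit S
  tr := S.tr \ youngerTr S
  out := S.out

section Aux

variable {X U Y Xa Xb Xc : Type}

lemma id_isASR (S : LTS X U Y) : S.IsASR S {p : X × X | p.1 = p.2} := by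
  refine ⟨fun xb hxb => ⟨xb, hxb, rfl⟩, fun xa xb h => by cases h; rfl, ?_⟩
  rintro xa xb (h : xa = xb) ua hua
  subst h
  exact ⟨ua, hua, fun xb' hxb' => ⟨xb', hxb', rfl⟩⟩

lemma max_isASR (S : LTS X U Y) : S.IsASR S (S.MaxASR S) := by
  refine ⟨?_, ?_, ?_⟩
  · intro xb hxb
    exact ⟨xb, hxb, ⟨_, id_isASR S, rfl⟩⟩
  · rintro xa xb ⟨R, hR, hmem⟩
    exact hR.2.1 xa xb hmem
  · rintro xa xb ⟨R, hR, hmem⟩ ua hua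
    obtain ⟨ub, hub, h⟩ := hR.2.2 xa xb hmem ua hua
    exact ⟨ub, hub, fun xb' hxb' => by
      obtain ⟨xa', hxa', hrel⟩ := h xb' hxb'
      exact ⟨xa', hxa', ⟨R, hR, hrel⟩⟩⟩

lemma comp_isASR (Sa : LTS Xa U Y) (Sb : LTS Xb U Y) (Sc : LTS Xc U Y)
    (R1 : Set (Xa × Xb)) (R2 : Set (Xb × Xc)) (h1 : Sa.IsASR Sb R1) (h2 : Sb.IsASR Sc R2) :
    Sa.IsASR Sc {p | ∃ b, (p.1, b) ∈ R1 ∧ (b, p.2) ∈ R2} := by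
  refine ⟨?_, ?_, ?_⟩
  · intro xc hxc
    obtain ⟨xb, hxb, h2'⟩ := h2.1 xc hxc
    obtain ⟨xa, hxa, h1'⟩ := h1.1 xb hxb
    exact ⟨xa, hxa, ⟨xb, h1', h2'⟩⟩
  · rintro xa xc ⟨b, hb1, hb2⟩
    exact (h1.2.1 xa b hb1).trans (h2.2.1 b xc hb2)
  · rintro xa xc ⟨b, hb1, hb2⟩ ua hua
    obtain ⟨um, hum, hm⟩ := h1.2.2 xa b hb1 ua hua
    obtain ⟨uc, huc, hc⟩ := h2.2.2 b xc hb2 um hum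
    refine ⟨uc, huc, fun xc' hxc' => ?_⟩
    obtain ⟨xb', hxb', hr2⟩ := hc xc' hxc'
    obtain ⟨xa', hxa', hr1⟩ := hm xb' hxb'
    exact ⟨xa', hxa', ⟨xb', hr1, hr2⟩⟩

lemma max_refl (S : LTS X U Y) (x : X) : (x, x) ∈ S.MaxASR S :=
  ⟨_, id_isASR S, rfl⟩

lemma max_trans (S : LTS X U Y) {a b c : X}
    (h1 : (a, b) ∈ S.MaxASR S) (h2 : (b, c) ∈ S.MaxASR S) : (a, c) ∈ S.MaxASR S :=
  ⟨_, comp_isASR S S S _ _ (max_isASR S) (max_isASR S), ⟨b, h1, h2⟩⟩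

/-- In a finite type, any set containing `x` has a member `m` that dominates `x`
and has no strictly greater element in the set. -/
lemma exists_elder [Finite X] (S : LTS X U Y) (A : Set X) (x : X) (hx : x ∈ A) :
    ∃ m ∈ A, (m, x) ∈ S.MaxASR S ∧
      ∀ y ∈ A, (y, m) ∈ S.MaxASR S → (m, y) ∈ S.MaxASR S := by
  classical
  let r : X → X → Prop := fun a b => (a, b) ∈ S.MaxASR S ∧ (b, a) ∉ S.MaxASR S
  have htr : Transitive r := by
    rintro a b c ⟨hab, hba⟩ ⟨hbc, hcb⟩
    exact ⟨max_trans S hab hbc, fun hca => hcb (max_trans S hca hab)⟩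
  have hirr : ∀ a, ¬ r a a := fun a ⟨h1, h2⟩ => h2 h1
  have hwf : WellFounded r := by
    haveI : IsTrans X r := ⟨htr⟩
    haveI : IsIrrefl X r := ⟨hirr⟩
    exact Finite.wellFounded_of_trans_of_irrefl r
  obtain ⟨m, hm, hmin⟩ := hwf.has_min {z ∈ A | (z, x) ∈ S.MaxASR S} ⟨x, hx, max_refl S x⟩
  refine ⟨m, hm.1, hm.2, fun y hy hym => ?_⟩
  by_contra hmy
  exact hmin y ⟨hy, max_trans S hym hm.2⟩ ⟨hym, hmy⟩

end Aux

theorem step3_preserves_ase {X U Y : Type} [Finite X] (S : LTS X U Y) :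
    S.IsASR (step3 S) {p : X × X | p.1 = p.2} ∧
    (step3 S).IsASR S (S.MaxASR S) ∧
    (step3 S).ASE S := by
  have part1 : S.IsASR (step3 S) {p : X × X | p.1 = p.2} := by
    refine ⟨?_, ?_, ?_⟩
    · intro xb hxb
      exact ⟨xb, hxb.1, rfl⟩
    · rintro xa xb (h : xa = xb); cases h; rfl
    · rintro xa xb (h : xa = xb) ua ⟨x', hx'⟩
      subst h
      -- pick an elder sibling among the u-successors
      obtain ⟨m, hmA, -, hmax⟩ := exists_elder S (S.Post xa ua) x' hx'
      have hmtr : (xa, ua, m) ∈ (step3 S).tr := by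
        refine ⟨hmA, ?_⟩
        rintro ⟨-, q, hq, hq1, hq2⟩
        exact hq2 (hmax q hq hq1)
      exact ⟨ua, ⟨m, hmtr⟩, fun xb' hxb' => ⟨xb', hxb'.1, rfl⟩⟩
  have part2 : (step3 S).IsASR S (S.MaxASR S) := by
    refine ⟨?_, ?_, ?_⟩
    · intro xb hxb
      obtain ⟨m, hmI, hmx, hmax⟩ := exists_elder S S.init xb hxb
      refine ⟨m, ⟨hmI, ?_⟩, hmx⟩
      rintro ⟨q0, hq0, hq1, hq2⟩
      exact hq2 (hmax q0 hq0 hq1)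
    · intro xa xb h
      exact (max_isASR S).2.1 xa xb h
    · intro xa xb h ua hua
      obtain ⟨x', hx'⟩ := hua
      have hua' : ua ∈ S.Enabled xa := ⟨x', hx'.1⟩
      obtain ⟨ub, hub, hsim⟩ := (max_isASR S).2.2 xa xb h ua hua'
      refine ⟨ub, hub, fun xb' hxb' => ?_⟩
      obtain ⟨xa', hxa', hrel⟩ := hsim xb' hxb'
      obtain ⟨m, hmA, hmx, hmax⟩ := exists_elder S (S.Post xa ua) xa' hxa'
      have hmtr : (xa, ua, m) ∈ (step3 S).tr := by
        refine ⟨hmA, ?_⟩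
        rintro ⟨-, q, hq, hq1, hq2⟩
        exact hq2 (hmax q hq hq1)
      exact ⟨m, hmtr, max_trans S hmx hrel⟩
  exact ⟨part1, part2, ⟨_, part2⟩, ⟨_, part1⟩⟩
end

section
/- In a minimal LTS modulo alternating simulation equivalence, no two distinct states are ASE-equivalent: if S_min is an LTS of minimal size among all LTSs alternating-simulation equivalent to a given finite LTS S, then for all states p, q of S_min, S_min(p) ≃_AS S_min(q) implies p = q. -/
namespace MinProofAux

open LTS

variable {Xm U Y Xa Xb Xc : Type}

/-- A relation on the states of `S` satisfying the output and step conditions of an ASR. -/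
def RelGood (S : LTS Xm U Y) (M : Xm → Xm → Prop) : Prop :=
  (∀ x y, M x y → S.out x = S.out y) ∧
  (∀ x y, M x y → ∀ u ∈ S.Enabled x, ∃ v ∈ S.Enabled y,
    ∀ y' ∈ S.Post y v, ∃ x' ∈ S.Post x u, M x' y')

lemma relGood_rtg {S : LTS Xm U Y} {r : Xm → Xm → Prop} (h : RelGood S r) :
    RelGood S (Relation.ReflTransGen r) := by
  constructor
  · intro x y hxy
    induction hxy with
    | refl => rfl
    | tail hxb hbc ih => exact ih.trans (h.1 _ _ hbc)
  · intro x y hxy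
    induction hxy with
    | refl =>
      intro u hu
      exact ⟨u, hu, fun y' hy' => ⟨y', hy', Relation.ReflTransGen.refl⟩⟩
    | tail hxb hbc ih =>
      intro u hu
      obtain ⟨v, hv, hcov⟩ := ih u hu
      obtain ⟨w, hw, hcov'⟩ := h.2 _ _ hbc v hv
      refine ⟨w, hw, fun c' hc' => ?_⟩
      obtain ⟨b', hb', hrb⟩ := hcov' c' hc'
      obtain ⟨x', hx', hrtx⟩ := hcov b' hb'
      exact ⟨x', hx', hrtx.tail hrb⟩

/-- Composition of alternating simulation relations. -/
lemma isASR_comp {Sa : LTS Xa U Y} {Sb : LTS Xb U Y} {Sc : LTS Xc U Y}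
    {R : Set (Xa × Xb)} {R2 : Set (Xb × Xc)}
    (h1 : Sa.IsASR Sb R) (h2 : Sb.IsASR Sc R2) :
    Sa.IsASR Sc {pr | ∃ b, (pr.1, b) ∈ R ∧ (b, pr.2) ∈ R2} := by
  refine ⟨?_, ?_, ?_⟩
  · intro xc hxc
    obtain ⟨xb, hxb, hbc⟩ := h2.1 xc hxc
    obtain ⟨xa, hxa, hab⟩ := h1.1 xb hxb
    exact ⟨xa, hxa, xb, hab, hbc⟩
  · rintro xa xc ⟨b, hab, hbc⟩
    exact (h1.2.1 xa b hab).trans (h2.2.1 b xc hbc)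
  · rintro xa xc ⟨b, hab, hbc⟩ ua hua
    obtain ⟨ub, hub, cov1⟩ := h1.2.2 xa b hab ua hua
    obtain ⟨uc, huc, cov2⟩ := h2.2.2 b xc hbc ub hub
    refine ⟨uc, huc, fun xc' hxc' => ?_⟩
    obtain ⟨xb', hxb', hb'c'⟩ := cov2 xc' hxc'
    obtain ⟨xa', hxa', ha'b'⟩ := cov1 xb' hxb'
    exact ⟨xa', hxa', xb', ha'b', hb'c'⟩

lemma ASE_trans {Sa : LTS Xa U Y} {Sb : LTS Xb U Y} {Sc : LTS Xc U Y}
    (h1 : Sa.ASE Sb) (h2 : Sb.ASE Sc) : Sa.ASE Sc := by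
  obtain ⟨⟨R1, hR1⟩, ⟨R1', hR1'⟩⟩ := h1
  obtain ⟨⟨R2, hR2⟩, ⟨R2', hR2'⟩⟩ := h2
  exact ⟨⟨_, isASR_comp hR1 hR2⟩, ⟨_, isASR_comp hR2' hR1'⟩⟩

attribute [local instance] Classical.propDecidable

/-- Projection merging `q` into `p`. -/
noncomputable def proj (p q : Xm) (h : p ≠ q) (x : Xm) : {x : Xm // x ≠ q} :=
  if hx : x = q then ⟨p, h⟩ else ⟨x, hx⟩

/-- The quotient that merges `q` into `p`: drop `q`'s outgoing transitions and redirect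
transitions into `q` to `p`. -/
noncomputable def merge (S : LTS Xm U Y) (p q : Xm) (h : p ≠ q) : LTS {x : Xm // x ≠ q} U Y where
  init := proj p q h '' S.init
  tr := {t | ∃ a u b, (a, u, b) ∈ S.tr ∧ a ≠ q ∧ t = (proj p q h a, u, proj p q h b)}
  out x := S.out x.val

lemma proj_rel {p q : Xm} (h : p ≠ q) {M : Xm → Xm → Prop} (hrefl : ∀ x, M x x)
    (hpq : M p q) (hqp : M q p) (x : Xm) :
    M (proj p q h x).val x ∧ M x (proj p q h x).val := by
  unfold proj
  split
  · next hx => subst hx; exact ⟨hpq, hqp⟩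
  · exact ⟨hrefl x, hrefl x⟩

lemma proj_of_ne {p q : Xm} (h : p ≠ q) {a : Xm} (ha : a ≠ q) :
    proj p q h a = ⟨a, ha⟩ := dif_neg ha

lemma merge_ASE (S : LTS Xm U Y) {p q : Xm} (h : p ≠ q) {M : Xm → Xm → Prop}
    (hg : RelGood S M) (hrefl : ∀ x, M x x)
    (htrans : ∀ {a b c}, M a b → M b c → M a c)
    (hpq : M p q) (hqp : M q p) : (merge S p q h).ASE S := by
  have hproj := proj_rel h hrefl hpq hqp
  constructor
  · -- IsASR (merge) S
    refine ⟨{pr | M pr.1.val pr.2}, ?_, ?_, ?_⟩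
    · intro y hy
      exact ⟨proj p q h y, ⟨y, hy, rfl⟩, (hproj y).1⟩
    · rintro x' y hM
      exact hg.1 _ _ hM
    · rintro x' y hM u hu
      obtain ⟨z, a0, u0, b0, htr, ha0, heq0⟩ := hu
      simp only [Prod.mk.injEq] at heq0
      obtain ⟨h1, h2, h3⟩ := heq0
      -- h1 : x' = proj a0, h2 : u = u0, h3 : z = proj b0
      rw [proj_of_ne h ha0] at h1
      subst h2
      have ha0x : a0 = x'.val := by rw [h1]
      subst ha0x
      have hu' : u ∈ S.Enabled x'.val := ⟨b0, htr⟩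
      obtain ⟨v, hv, hcov⟩ := hg.2 _ _ hM u hu'
      refine ⟨v, hv, fun y' hy' => ?_⟩
      obtain ⟨a', ha', hM'⟩ := hcov y' hy'
      refine ⟨proj p q h a', ⟨x'.val, u, a', ha', ha0, ?_⟩, htrans (hproj a').1 hM'⟩
      rw [proj_of_ne h ha0, ← h1]
  · -- IsASR S (merge)
    refine ⟨{pr | M pr.1 pr.2.val}, ?_, ?_, ?_⟩
    · rintro x' ⟨y0, hy0, rfl⟩
      exact ⟨y0, hy0, (hproj y0).2⟩
    · rintro y x' hM
      exact hg.1 _ _ hM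
    · rintro y x' hM u hu
      obtain ⟨v, hv, hcov⟩ := hg.2 _ _ hM u hu
      obtain ⟨b1, hb1⟩ := hv
      have hx'ne : x'.val ≠ q := x'.2
      refine ⟨v, ⟨proj p q h b1, x'.val, v, b1, hb1, hx'ne, by rw [proj_of_ne h hx'ne]⟩,
        fun x'' hx'' => ?_⟩
      obtain ⟨a0, u0, b0, htr, ha0, heq0⟩ := hx''
      simp only [Prod.mk.injEq] at heq0
      obtain ⟨h1, h2, h3⟩ := heq0
      -- h1 : x' = proj a0, h2 : v = u0, h3 : x'' = proj b0
      rw [proj_of_ne h ha0] at h1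
      have ha0x : a0 = x'.val := by rw [h1]
      subst h2; subst ha0x
      have hb0 : b0 ∈ S.Post x'.val v := htr
      obtain ⟨y', hy', hM'⟩ := hcov b0 hb0
      exact ⟨y', hy', h3 ▸ htrans hM' (hproj b0).2⟩

end MinProofAux

theorem minimal_no_equivalent_states {X Xm U Y : Type} [Finite X] [Finite Xm]
    (S : LTS X U Y) (Smin : LTS Xm U Y)
    (heq : Smin.ASE S)
    (hmin : ∀ (X' : Type) [Finite X'] (S' : LTS X' U Y), S'.ASE S →
      Nat.card Xm ≤ Nat.card X' ∧
      Nat.card Smin.init ≤ Nat.card S'.init ∧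
      Nat.card Smin.tr ≤ Nat.card S'.tr) :
    ∀ p q : Xm, (Smin.withInit p).ASE (Smin.withInit q) → p = q := by
  intro p q hpq
  by_contra hne
  obtain ⟨⟨R, hR⟩, ⟨R', hR'⟩⟩ := hpq
  -- extract membership of (p,q) and (q,p)
  have hmemR : (p, q) ∈ R := by
    obtain ⟨xa, hxa, hmem⟩ := hR.1 q rfl
    have : xa = p := hxa
    rwa [this] at hmem
  have hmemR' : (q, p) ∈ R' := by
    obtain ⟨xa, hxa, hmem⟩ := hR'.1 p rfl
    have : xa = q := hxa
    rwa [this] at hmem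
  -- the union relation is good with respect to Smin
  set r : Xm → Xm → Prop := fun x y => (x, y) ∈ R ∨ (x, y) ∈ R' with hrdef
  have hgoodr : MinProofAux.RelGood Smin r := by
    constructor
    · rintro x y (hxy | hxy)
      · exact hR.2.1 x y hxy
      · exact hR'.2.1 x y hxy
    · rintro x y (hxy | hxy) u hu
      · obtain ⟨v, hv, hcov⟩ := hR.2.2 x y hxy u hu
        exact ⟨v, hv, fun y' hy' => by
          obtain ⟨x', hx', hm⟩ := hcov y' hy'
          exact ⟨x', hx', Or.inl hm⟩⟩
      · obtain ⟨v, hv, hcov⟩ := hR'.2.2 x y hxy u hu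
        exact ⟨v, hv, fun y' hy' => by
          obtain ⟨x', hx', hm⟩ := hcov y' hy'
          exact ⟨x', hx', Or.inr hm⟩⟩
  set M : Xm → Xm → Prop := Relation.ReflTransGen r with hMdef
  have hgoodM : MinProofAux.RelGood Smin M := MinProofAux.relGood_rtg hgoodr
  have hMrefl : ∀ x, M x x := fun x => Relation.ReflTransGen.refl
  have hMtrans : ∀ {a b c}, M a b → M b c → M a c :=
    fun hab hbc => hab.trans hbc
  have hMpq : M p q := Relation.ReflTransGen.single (Or.inl hmemR)
  have hMqp : M q p := Relation.ReflTransGen.single (Or.inr hmemR')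
  -- the merged (quotient) system
  have hASE' : (MinProofAux.merge Smin p q hne).ASE Smin :=
    MinProofAux.merge_ASE Smin hne hgoodM hMrefl hMtrans hMpq hMqp
  have hASE : (MinProofAux.merge Smin p q hne).ASE S := MinProofAux.ASE_trans hASE' heq
  have hle := (hmin _ (MinProofAux.merge Smin p q hne) hASE).1
  have hlt : Nat.card {x : Xm // x ≠ q} < Nat.card Xm :=
    Finite.card_subtype_lt (p := fun x => x ≠ q) (x := q) (by simp)
  omega
end
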